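/- arXiv:2509.09773 — 4 statements merged into one kernel-verified Lean document; each statement's English description precedes it below -/
import Mathlib

section
/- Let α>0, β∈(0,α), C>0 and let (a_n) be nonnegative reals with a_n = o(n^{−(2+2β/3)/(2(1+β))}). Define h_n := C·log n·n^{1/4}·(max(log n/(C·n), a_n))^{3/4}. Then n^{1/4}·a_n^{3/4} = o(h_n) and h_n = o(n^{−1/(2(1+α))}). -/
open Filter Topology

lemma log_mul_rpow_neg_tendsto (r : ℝ) (hr : 0 < r) :
    Tendsto (fun n : ℕ => Real.log n * (n : ℝ) ^ (-r)) atTop (𝓝 0) := by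
  have h1 : Tendsto (fun x : ℝ => Real.log x / x ^ r) atTop (𝓝 0) :=
    (isLittleO_log_rpow_atTop hr).tendsto_div_nhds_zero
  have h2 := h1.comp (tendsto_natCast_atTop_atTop (R := ℝ))
  refine h2.congr' ?_
  filter_upwards [eventually_ge_atTop 1] with n hn
  have hn0 : (0:ℝ) ≤ n := by positivity
  simp [Function.comp, Real.rpow_neg hn0, div_eq_mul_inv]

theorem stmt_4 (α β C : ℝ) (hα : 0 < α) (hβ : β ∈ Set.Ioo 0 α) (hC : 0 < C)
    (a : ℕ → ℝ) (ha : ∀ n, 0 ≤ a n)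
    (ha_rate : Tendsto
      (fun n : ℕ => a n / (n : ℝ) ^ (-((2 + 2 * β / 3) / (2 * (1 + β))))) atTop (𝓝 0))
    (h : ℕ → ℝ)
    (hdef : ∀ n : ℕ, h n = C * Real.log n * (n : ℝ) ^ ((1 : ℝ) / 4) *
      (max (Real.log n / (C * n)) (a n)) ^ ((3 : ℝ) / 4)) :
    Tendsto (fun n : ℕ => (n : ℝ) ^ ((1 : ℝ) / 4) * (a n) ^ ((3 : ℝ) / 4) / h n)
      atTop (𝓝 0) ∧
    Tendsto (fun n : ℕ => h n / (n : ℝ) ^ (-(1 / (2 * (1 + α))))) atTop (𝓝 0) := by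
  obtain ⟨hβ0, hβα⟩ := hβ
  set γ : ℝ := (2 + 2 * β / 3) / (2 * (1 + β)) with hγdef
  have h1β : (0:ℝ) < 1 + β := by linarith
  have h1α : (0:ℝ) < 1 + α := by linarith
  have hγ1 : γ < 1 := by
    rw [hγdef, div_lt_one (by linarith)]; linarith
  have hγ0 : 0 < γ := by
    rw [hγdef]; positivity
  set ε : ℝ := 1/(2*(1+β)) - 1/(2*(1+α)) with hεdef
  have hε : 0 < ε := by
    have : 1/(2*(1+α)) < 1/(2*(1+β)) := by
      apply one_div_lt_one_div_of_lt <;> nlinarith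
    rw [hεdef]; linarith
  have hexp : 1/4 + 1/(2*(1+α)) = γ * (3/4) + (-ε) := by
    rw [hγdef, hεdef]
    field_simp
    ring
  -- positivity facts for n ≥ 2
  have hfacts : ∀ n : ℕ, 2 ≤ n → (0:ℝ) < n ∧ 0 < Real.log n ∧
      0 < max (Real.log n / (C * n)) (a n) ∧ 0 < h n := by
    intro n hn
    have hn2 : (2:ℝ) ≤ (n:ℝ) := by exact_mod_cast hn
    have hn0 : (0:ℝ) < n := by linarith
    have hlog : 0 < Real.log n := Real.log_pos (by linarith)
    have hM : 0 < max (Real.log n / (C * n)) (a n) :=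
      lt_max_of_lt_left (by positivity)
    refine ⟨hn0, hlog, hM, ?_⟩
    rw [hdef n]
    exact mul_pos (mul_pos (mul_pos hC hlog) (Real.rpow_pos_of_pos hn0 _))
      (Real.rpow_pos_of_pos hM _)
  constructor
  · -- Part 1
    have hub : Tendsto (fun n : ℕ => (C * Real.log n)⁻¹) atTop (𝓝 0) := by
      apply Tendsto.inv_tendsto_atTop
      exact Tendsto.const_mul_atTop hC
        (Real.tendsto_log_atTop.comp (tendsto_natCast_atTop_atTop (R := ℝ)))
    refine tendsto_of_tendsto_of_tendsto_of_le_of_le' tendsto_const_nhds hub ?_ ?_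
    · filter_upwards [eventually_ge_atTop 2] with n hn
      obtain ⟨hn0, hlog, hM, hpos⟩ := hfacts n hn
      exact div_nonneg (mul_nonneg (Real.rpow_nonneg hn0.le _) (Real.rpow_nonneg (ha n) _)) hpos.le
    · filter_upwards [eventually_ge_atTop 2] with n hn
      obtain ⟨hn0, hlog, hM, hpos⟩ := hfacts n hn
      rw [div_le_iff₀ hpos, hdef n]
      have hkey : (C * Real.log n)⁻¹ * (C * Real.log n * (n:ℝ) ^ ((1:ℝ)/4) *
          (max (Real.log n / (C * n)) (a n)) ^ ((3:ℝ)/4))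
          = (n:ℝ) ^ ((1:ℝ)/4) * (max (Real.log n / (C * n)) (a n)) ^ ((3:ℝ)/4) := by
        field_simp
      rw [hkey]
      exact mul_le_mul_of_nonneg_left
        (Real.rpow_le_rpow (ha n) (le_max_right _ _) (by norm_num))
        (Real.rpow_nonneg hn0.le _)
  · -- Part 2
    have e2 : Tendsto (fun n : ℕ => a n * (n:ℝ) ^ γ) atTop (𝓝 0) := by
      refine ha_rate.congr fun n => ?_
      rw [Real.rpow_neg (by positivity), div_eq_mul_inv, inv_inv]
    have e1 : Tendsto (fun n : ℕ => Real.log n / (C * n) * (n:ℝ) ^ γ) atTop (𝓝 0) := by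
      have base := (log_mul_rpow_neg_tendsto (1 - γ) (by linarith)).const_mul C⁻¹
      rw [mul_zero] at base
      refine base.congr' ?_
      filter_upwards [eventually_ge_atTop 1] with n hn
      have hn0 : (0:ℝ) < n := by exact_mod_cast hn
      rw [show -(1-γ) = γ + (-1) by ring, Real.rpow_add hn0, Real.rpow_neg_one]
      field_simp
    have hMten : Tendsto (fun n : ℕ =>
        (max (Real.log n / (C * n)) (a n)) * (n:ℝ) ^ γ) atTop (𝓝 0) := by
      have := e1.max e2
      rw [max_self] at this
      refine this.congr ?_
      intro n
      rw [max_mul_of_nonneg _ _ (Real.rpow_nonneg (by positivity) γ)]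
    have hM34 : Tendsto (fun n : ℕ =>
        ((max (Real.log n / (C * n)) (a n)) * (n:ℝ) ^ γ) ^ ((3:ℝ)/4)) atTop (𝓝 0) := by
      have := hMten.rpow_const (p := (3:ℝ)/4) (Or.inr (by norm_num))
      simpa [Real.zero_rpow] using this
    have main : Tendsto (fun n : ℕ =>
        C * (Real.log n * (n:ℝ) ^ (-ε)) *
        ((max (Real.log n / (C * n)) (a n)) * (n:ℝ) ^ γ) ^ ((3:ℝ)/4)) atTop (𝓝 0) := by
      have := ((log_mul_rpow_neg_tendsto ε hε).const_mul C).mul hM34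
      simpa using this
    refine main.congr' ?_
    filter_upwards [eventually_ge_atTop 2] with n hn
    obtain ⟨hn0, hlog, hM, hpos⟩ := hfacts n hn
    have hd : h n / (n:ℝ) ^ (-(1/(2*(1+α)))) = h n * (n:ℝ) ^ (1/(2*(1+α))) := by
      rw [Real.rpow_neg hn0.le, div_eq_mul_inv, inv_inv]
    rw [hd, hdef n, Real.mul_rpow hM.le (Real.rpow_nonneg hn0.le γ), ← Real.rpow_mul hn0.le]
    have key : (n:ℝ) ^ (-ε) * (n:ℝ) ^ (γ * (3/4))
        = (n:ℝ) ^ ((1:ℝ)/4) * (n:ℝ) ^ (1/(2*(1+α))) := by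
      rw [← Real.rpow_add hn0, ← Real.rpow_add hn0]
      congr 1
      linarith [hexp]
    linear_combination (C * Real.log n *
      (max (Real.log n / (C * ↑n)) (a n)) ^ ((3:ℝ)/4)) * key
end

section
/- The mean outcome under the optimal treatment regime is identified by the AIPW score with the true nuisances and the threshold rule: E[ψ(d₀, π₁, (μ₁,μ₀))] = V₀, where d₀(x)=1{τ(x)>0}. -/
/-!
Write `d = D(X)`, `π = π₁(X)`. Whatever the treatment `A ∈ {0, 1}`, the AIPW score splits as
`(d / π) · A (Y - μ₁(X)) + ((1 - d) / (1 - π)) · (1 - A)(Y - μ₀(X)) + d μ₁(X) + (1 - d) μ₀(X)`.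
The two outcome models are exactly the regressions of `Y` on `X` within each arm, so the residuals
`A (Y - μ₁(X))` and `(1 - A)(Y - μ₀(X))` have conditional mean zero given `X`; overlap keeps their
`X`-measurable weights bounded, hence both weighted residuals integrate to zero and the score has
mean `V(D)`. For the threshold rule `d₀`, the plug-in term is `max(μ₁(X), μ₀(X))` pointwise.
-/

open MeasureTheory ProbabilityTheory Filter Topology
open scoped Classical

/-- AIPW score `ψ(D, p, (m₁, m₀))` evaluated at a sample point `ω`. -/
noncomputable def aipw {Ω 𝒳 : Type*} (X : Ω → 𝒳) (A Y : Ω → ℝ)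
    (D p m₁ m₀ : 𝒳 → ℝ) (ω : Ω) : ℝ :=
  (A ω * D (X ω) + (1 - A ω) * (1 - D (X ω))) /
      (A ω * p (X ω) + (1 - A ω) * (1 - p (X ω))) *
    (Y ω - (A ω * m₁ (X ω) + (1 - A ω) * m₀ (X ω)))
  + D (X ω) * m₁ (X ω) + (1 - D (X ω)) * m₀ (X ω)

section CondExp

variable {Ω : Type*} {m mΩ : MeasurableSpace Ω} {P : Measure Ω}

theorem integral_mul_eq_zero_of_condExp_eq_zero (hm : m ≤ mΩ) [SigmaFinite (P.trim hm)]
    {g f : Ω → ℝ} {C : ℝ} (hg : StronglyMeasurable[m] g) (hgC : ∀ ω, ‖g ω‖ ≤ C)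
    (hf : Integrable f P) (hf0 : P[f | m] =ᵐ[P] 0) :
    ∫ ω, g ω * f ω ∂P = 0 := by
  have hgf : Integrable (g * f) P :=
    hf.bdd_mul (hg.mono hm).aestronglyMeasurable (.of_forall hgC)
  have hcond : P[g * f | m] =ᵐ[P] 0 := by
    filter_upwards [condExp_mul_of_stronglyMeasurable_left hg hgf hf, hf0] with ω h h0
    simp [h, h0]
  calc ∫ ω, g ω * f ω ∂P = ∫ ω, P[g * f | m] ω ∂P := (integral_condExp hm).symm
    _ = 0 := by simp [integral_congr_ae hcond]

theorem condExp_mul_sub_eq_zero {B Y μ π : Ω → ℝ} (hμ : StronglyMeasurable[m] μ)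
    (hB : Integrable B P) (hBY : Integrable (B * Y) P) (hμB : Integrable (μ * B) P)
    (hcondB : P[B | m] =ᵐ[P] π) (hcondBY : P[B * Y | m] =ᵐ[P] μ * π) :
    P[B * (Y - μ) | m] =ᵐ[P] 0 := by
  have hsplit : B * (Y - μ) = B * Y - μ * B := by ring
  rw [hsplit]
  filter_upwards [condExp_sub hBY hμB m, hcondBY,
    condExp_mul_of_stronglyMeasurable_left hμ hμB hB, hcondB] with ω h hBY' hμB' hB'
  simp only [Pi.sub_apply, Pi.mul_apply, Pi.zero_apply] at *
  rw [h, hBY', hμB', hB', sub_self]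

theorem condExp_one_sub_eq [IsFiniteMeasure P] (hm : m ≤ mΩ) {B π : Ω → ℝ}
    (hB : Integrable B P) (hcondB : P[B | m] =ᵐ[P] π) :
    P[1 - B | m] =ᵐ[P] 1 - π := by
  have hone : P[1 | m] = (1 : Ω → ℝ) := condExp_const hm (1 : ℝ)
  have hone_int : Integrable (1 : Ω → ℝ) P := integrable_const 1
  filter_upwards [condExp_sub hone_int hB m, hcondB] with ω h hB'
  simp only [Pi.sub_apply, Pi.one_apply] at *
  rw [h, hone, hB', Pi.one_apply]

end CondExp

section Regression

variable {Ω 𝒳 : Type*} [MeasurableSpace Ω] [MeasurableSpace 𝒳] {P : Measure Ω}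
  {X : Ω → 𝒳} {B Y : Ω → ℝ} {μ π w : 𝒳 → ℝ} {K C : ℝ}

theorem integrable_weight_mul_residual (hX : Measurable X) (hBm : AEStronglyMeasurable B P)
    (hB : ∀ ω, ‖B ω‖ ≤ K) (hY : Integrable Y P) (hμ : Integrable (fun ω => μ (X ω)) P)
    (hwm : Measurable w) (hw : ∀ x, ‖w x‖ ≤ C) :
    Integrable (fun ω => w (X ω) * (B ω * (Y ω - μ (X ω)))) P :=
  ((hY.sub hμ).bdd_mul hBm (.of_forall hB)).bdd_mul (hwm.comp hX).aestronglyMeasurable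
    (.of_forall fun ω => hw (X ω))

theorem integral_weight_mul_residual_eq_zero [IsFiniteMeasure P] (hX : Measurable X)
    (hBm : AEStronglyMeasurable B P) (hB : ∀ ω, ‖B ω‖ ≤ K) (hY : Integrable Y P)
    (hμm : Measurable μ) (hμ : Integrable (fun ω => μ (X ω)) P)
    (hcondB : P[B | MeasurableSpace.comap X inferInstance] =ᵐ[P] fun ω => π (X ω))
    (hcondBY : P[fun ω => B ω * Y ω | MeasurableSpace.comap X inferInstance]
      =ᵐ[P] fun ω => μ (X ω) * π (X ω))
    (hwm : Measurable w) (hw : ∀ x, ‖w x‖ ≤ C) :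
    ∫ ω, w (X ω) * (B ω * (Y ω - μ (X ω))) ∂P = 0 :=
  integral_mul_eq_zero_of_condExp_eq_zero hX.comap_le
    (hwm.comp (comap_measurable X)).stronglyMeasurable (fun ω => hw (X ω))
    ((hY.sub hμ).bdd_mul hBm (.of_forall hB))
    (condExp_mul_sub_eq_zero (hμm.comp (comap_measurable X)).stronglyMeasurable
      (.of_bound hBm K (.of_forall hB)) (hY.bdd_mul hBm (.of_forall hB))
      (hμ.mul_bdd hBm (.of_forall hB)) hcondB hcondBY)

end Regression

theorem norm_le_one_of_mem_Icc {d : ℝ} (hd : d ∈ Set.Icc (0 : ℝ) 1) : ‖d‖ ≤ 1 := by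
  rw [Real.norm_eq_abs, abs_of_nonneg hd.1]
  exact hd.2

theorem abs_div_le_inv_of_mem_Icc {d q c : ℝ} (hd : d ∈ Set.Icc (0 : ℝ) 1) (hc : 0 < c)
    (hq : c ≤ q) : |d / q| ≤ c⁻¹ := by
  have hq0 : 0 < q := hc.trans_le hq
  rw [abs_of_nonneg (div_nonneg hd.1 hq0.le), ← one_div]
  calc d / q ≤ 1 / q := div_le_div_of_nonneg_right hd.2 hq0.le
    _ ≤ 1 / c := one_div_le_one_div_of_le hc hq

theorem aipw_eq_weighted_residuals_add {Ω 𝒳 : Type*} (X : Ω → 𝒳) (A Y : Ω → ℝ)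
    (D p m₁ m₀ : 𝒳 → ℝ) (ω : Ω) (hA : A ω = 0 ∨ A ω = 1) :
    aipw X A Y D p m₁ m₀ ω =
      D (X ω) / p (X ω) * (A ω * (Y ω - m₁ (X ω)))
        + (1 - D (X ω)) / (1 - p (X ω)) * ((1 - A ω) * (Y ω - m₀ (X ω)))
        + (D (X ω) * m₁ (X ω) + (1 - D (X ω)) * m₀ (X ω)) := by
  rcases hA with h | h <;> simp only [aipw, h] <;> ring

theorem integral_aipw_eq_value {Ω 𝒳 : Type*} [MeasurableSpace Ω] [MeasurableSpace 𝒳]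
    (P : Measure Ω) [IsFiniteMeasure P] (X : Ω → 𝒳) (A Y : Ω → ℝ)
    (hX : Measurable X) (hA : Measurable A) (hAbin : ∀ ω, A ω = 0 ∨ A ω = 1)
    (hY : Integrable Y P) {c : ℝ} (hc : 0 < c)
    (π₁ : 𝒳 → ℝ) (hπ₁m : Measurable π₁) (hπ₁r : ∀ x, π₁ x ∈ Set.Icc c (1 - c))
    (hcondA : P[A | MeasurableSpace.comap X inferInstance] =ᵐ[P] fun ω => π₁ (X ω))
    (μ₁ μ₀ : 𝒳 → ℝ) (hμ₁m : Measurable μ₁) (hμ₀m : Measurable μ₀)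
    (hμ₁ : Integrable (fun ω => μ₁ (X ω)) P) (hμ₀ : Integrable (fun ω => μ₀ (X ω)) P)
    (hcond1 : P[fun ω => A ω * Y ω | MeasurableSpace.comap X inferInstance]
      =ᵐ[P] fun ω => μ₁ (X ω) * π₁ (X ω))
    (hcond0 : P[fun ω => (1 - A ω) * Y ω | MeasurableSpace.comap X inferInstance]
      =ᵐ[P] fun ω => μ₀ (X ω) * (1 - π₁ (X ω)))
    (D : 𝒳 → ℝ) (hDm : Measurable D) (hD : ∀ x, D x ∈ Set.Icc (0 : ℝ) 1) :
    ∫ ω, aipw X A Y D π₁ μ₁ μ₀ ω ∂P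
      = ∫ ω, D (X ω) * μ₁ (X ω) + (1 - D (X ω)) * μ₀ (X ω) ∂P := by
  have hAI (ω : Ω) : A ω ∈ Set.Icc (0 : ℝ) 1 := by rcases hAbin ω with h | h <;> simp [h]
  have hA1 (ω : Ω) : ‖A ω‖ ≤ 1 := norm_le_one_of_mem_Icc (hAI ω)
  have h1A1 (ω : Ω) : ‖1 - A ω‖ ≤ 1 := norm_le_one_of_mem_Icc (Set.Icc.one_sub_mem (hAI ω))
  have hAm : AEStronglyMeasurable A P := hA.aestronglyMeasurable
  have h1Am : AEStronglyMeasurable (fun ω => 1 - A ω) P := (hA.const_sub 1).aestronglyMeasurable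
  have hw₁m : Measurable fun x => D x / π₁ x := hDm.div hπ₁m
  have hw₀m : Measurable fun x => (1 - D x) / (1 - π₁ x) :=
    (measurable_const.sub hDm).div (measurable_const.sub hπ₁m)
  have hw₁ (x : 𝒳) : ‖D x / π₁ x‖ ≤ c⁻¹ := abs_div_le_inv_of_mem_Icc (hD x) hc (hπ₁r x).1
  have hw₀ (x : 𝒳) : ‖(1 - D x) / (1 - π₁ x)‖ ≤ c⁻¹ :=
    abs_div_le_inv_of_mem_Icc (Set.Icc.one_sub_mem (hD x)) hc (le_sub_comm.mp (hπ₁r x).2)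
  have hcond1A : P[fun ω => 1 - A ω | MeasurableSpace.comap X inferInstance]
      =ᵐ[P] fun ω => 1 - π₁ (X ω) :=
    condExp_one_sub_eq hX.comap_le (.of_bound hAm 1 (.of_forall hA1)) hcondA
  have hres₁ := integral_weight_mul_residual_eq_zero hX hAm hA1 hY hμ₁m hμ₁ hcondA hcond1 hw₁m hw₁
  have hres₀ := integral_weight_mul_residual_eq_zero (π := fun x => 1 - π₁ x) hX h1Am h1A1 hY
    hμ₀m hμ₀ hcond1A hcond0 hw₀m hw₀
  have hint₁ := integrable_weight_mul_residual hX hAm hA1 hY hμ₁ hw₁m hw₁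
  have hint₀ := integrable_weight_mul_residual hX h1Am h1A1 hY hμ₀ hw₀m hw₀
  have hint : Integrable (fun ω => D (X ω) * μ₁ (X ω) + (1 - D (X ω)) * μ₀ (X ω)) P :=
    (hμ₁.bdd_mul (hDm.comp hX).aestronglyMeasurable
        (.of_forall fun ω => norm_le_one_of_mem_Icc (hD (X ω)))).add
      (hμ₀.bdd_mul ((measurable_const.sub hDm).comp hX).aestronglyMeasurable
        (.of_forall fun ω => norm_le_one_of_mem_Icc (Set.Icc.one_sub_mem (hD (X ω)))))
  calc ∫ ω, aipw X A Y D π₁ μ₁ μ₀ ω ∂P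
      = ∫ ω, D (X ω) / π₁ (X ω) * (A ω * (Y ω - μ₁ (X ω)))
          + (1 - D (X ω)) / (1 - π₁ (X ω)) * ((1 - A ω) * (Y ω - μ₀ (X ω)))
          + (D (X ω) * μ₁ (X ω) + (1 - D (X ω)) * μ₀ (X ω)) ∂P :=
        integral_congr_ae (.of_forall fun ω =>
          aipw_eq_weighted_residuals_add X A Y D π₁ μ₁ μ₀ ω (hAbin ω))
    _ = ∫ ω, D (X ω) * μ₁ (X ω) + (1 - D (X ω)) * μ₀ (X ω) ∂P := by
        rw [integral_add (by exact hint₁.add hint₀) hint, integral_add hint₁ hint₀, hres₁, hres₀,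
          zero_add, zero_add]

theorem threshold_mul_add_eq_max (a b : ℝ) :
    (if 0 < a - b then 1 else 0) * a + (1 - if 0 < a - b then 1 else 0) * b = max a b := by
  split_ifs with h
  · rw [max_eq_left (by linarith)]; ring
  · rw [max_eq_right (by linarith)]; ring

theorem stmt_5_general {Ω 𝒳 : Type*} [MeasurableSpace Ω] [MeasurableSpace 𝒳]
    (P : Measure Ω) [IsProbabilityMeasure P]
    (X : Ω → 𝒳) (A Y : Ω → ℝ)
    (hX : Measurable X) (hA : Measurable A)
    (hAbin : ∀ ω, A ω = 0 ∨ A ω = 1) (hYL2 : MemLp Y 2 P)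
    (c : ℝ) (hc : c ∈ Set.Ioo (0 : ℝ) (1 / 2))
    (π₁ : 𝒳 → ℝ) (hπ₁m : Measurable π₁) (hπ₁r : ∀ x, π₁ x ∈ Set.Icc c (1 - c))
    (hcondA : P[A | MeasurableSpace.comap X inferInstance]
      =ᵐ[P] fun ω => π₁ (X ω))
    (μ₁ μ₀ : 𝒳 → ℝ) (hμ₁m : Measurable μ₁) (hμ₀m : Measurable μ₀)
    (hμ₁L2 : MemLp (fun ω => μ₁ (X ω)) 2 P) (hμ₀L2 : MemLp (fun ω => μ₀ (X ω)) 2 P)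
    (hcond1 : P[fun ω => A ω * Y ω | MeasurableSpace.comap X inferInstance]
      =ᵐ[P] fun ω => μ₁ (X ω) * π₁ (X ω))
    (hcond0 : P[fun ω => (1 - A ω) * Y ω | MeasurableSpace.comap X inferInstance]
      =ᵐ[P] fun ω => μ₀ (X ω) * (1 - π₁ (X ω)))
    (d₀ : 𝒳 → ℝ) (hd₀ : ∀ x, d₀ x = if 0 < μ₁ x - μ₀ x then 1 else 0) :
    ∫ ω, aipw X A Y d₀ π₁ μ₁ μ₀ ω ∂P = ∫ ω, max (μ₁ (X ω)) (μ₀ (X ω)) ∂P := by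
  have hd₀m : Measurable d₀ := by
    rw [funext hd₀]
    exact Measurable.ite (measurableSet_lt measurable_const (hμ₁m.sub hμ₀m))
      measurable_const measurable_const
  have hd₀I (x : 𝒳) : d₀ x ∈ Set.Icc (0 : ℝ) 1 := by rw [hd₀]; split_ifs <;> simp
  rw [integral_aipw_eq_value P X A Y hX hA hAbin (hYL2.integrable one_le_two) hc.1 π₁ hπ₁m
    hπ₁r hcondA μ₁ μ₀ hμ₁m hμ₀m (hμ₁L2.integrable one_le_two) (hμ₀L2.integrable one_le_two)
    hcond1 hcond0 d₀ hd₀m hd₀I]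
  simp only [hd₀, threshold_mul_add_eq_max]

/-- The mean outcome under the optimal treatment regime is identified by the
AIPW score with the true nuisances and the threshold rule:
`E[ψ(d₀, π₁, (μ₁, μ₀))] = V₀ = E[max(μ₁(X), μ₀(X))]`, where `d₀(x) = 1{τ(x) > 0}` and
`τ = μ₁ − μ₀`. -/
theorem stmt_5 {Ω 𝒳 : Type*} [MeasurableSpace Ω] [MeasurableSpace 𝒳]
    (P : Measure Ω) [IsProbabilityMeasure P]
    (X : Ω → 𝒳) (A Y : Ω → ℝ)
    (hX : Measurable X) (hA : Measurable A) (hY : Measurable Y)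
    (hAbin : ∀ ω, A ω = 0 ∨ A ω = 1) (hYL2 : MemLp Y 2 P)
    (c : ℝ) (hc : c ∈ Set.Ioo (0 : ℝ) (1 / 2))
    (π₁ : 𝒳 → ℝ) (hπ₁m : Measurable π₁) (hπ₁r : ∀ x, π₁ x ∈ Set.Icc c (1 - c))
    (hcondA : P[A | MeasurableSpace.comap X inferInstance]
      =ᵐ[P] fun ω => π₁ (X ω))
    (μ₁ μ₀ : 𝒳 → ℝ) (hμ₁m : Measurable μ₁) (hμ₀m : Measurable μ₀)
    (hμ₁L2 : MemLp (fun ω => μ₁ (X ω)) 2 P) (hμ₀L2 : MemLp (fun ω => μ₀ (X ω)) 2 P)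
    (hcond1 : P[fun ω => A ω * Y ω | MeasurableSpace.comap X inferInstance]
      =ᵐ[P] fun ω => μ₁ (X ω) * π₁ (X ω))
    (hcond0 : P[fun ω => (1 - A ω) * Y ω | MeasurableSpace.comap X inferInstance]
      =ᵐ[P] fun ω => μ₀ (X ω) * (1 - π₁ (X ω)))
    (d₀ : 𝒳 → ℝ) (hd₀ : ∀ x, d₀ x = if 0 < μ₁ x - μ₀ x then 1 else 0) :
    ∫ ω, aipw X A Y d₀ π₁ μ₁ μ₀ ω ∂P = ∫ ω, max (μ₁ (X ω)) (μ₀ (X ω)) ∂P :=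
  stmt_5_general P X A Y hX hA hAbin hYL2 c hc π₁ hπ₁m hπ₁r hcondA μ₁ μ₀ hμ₁m hμ₀m hμ₁L2 hμ₀L2
    hcond1 hcond0 d₀ hd₀
end

section
/- Double robustness with correct propensity score: for every measurable D:𝒳→[0,1] and every pair of working outcome models m₁,m₀:𝒳→ℝ with m₁(X),m₀(X)∈L², E[ψ(D, π₁, (m₁,m₀))] = V(D); that is, the AIPW score evaluated with the true propensity score π₁ is unbiased for the value V(D) regardless of the outcome working models. -/
open MeasureTheory ProbabilityTheory Filter Topology
open scoped Classical

/-!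
Since `A ∈ {0, 1}`, the AIPW score is the sum of two arms
`(w / e)(X) · B · (Y - m(X)) + w(X) · m(X)`, with `(B, e, w, m)` equal to `(A, π₁, D, m₁)` and
to `(1 - A, 1 - π₁, 1 - D, m₀)`, where `E[B ∣ X] = e(X)` and `E[B · Y ∣ X] = μ(X) · e(X)`.
Given `X`, the residual `B · (Y - m(X))` has conditional mean `(μ - m)(X) · e(X)`, so the true
propensity cancels and the arm has conditional mean `w(X) · μ(X)`, whatever `m` is.
-/

section

variable {Ω 𝒳 : Type*}

noncomputable def aipwArm (X : Ω → 𝒳) (B Y : Ω → ℝ) (w e m : 𝒳 → ℝ) (ω : Ω) : ℝ :=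
  w (X ω) / e (X ω) * (B ω * (Y ω - m (X ω))) + w (X ω) * m (X ω)

lemma aipw_eq_aipwArm_add_aipwArm (X : Ω → 𝒳) {A : Ω → ℝ} (Y : Ω → ℝ) (D p m₁ m₀ : 𝒳 → ℝ)
    (hA : ∀ ω, A ω = 0 ∨ A ω = 1) :
    aipw X A Y D p m₁ m₀ = aipwArm X A Y D p m₁
      + aipwArm X (fun ω => 1 - A ω) Y (fun x => 1 - D x) (fun x => 1 - p x) m₀ := by
  funext ω
  rcases hA ω with h | h <;> simp only [aipw, aipwArm, Pi.add_apply, h] <;> ring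

lemma norm_le_one_of_mem_Icc_s7 {x : ℝ} (hx : x ∈ Set.Icc (0 : ℝ) 1) : ‖x‖ ≤ 1 := by
  rw [Real.norm_of_nonneg hx.1]
  exact hx.2

lemma norm_div_le_one_div {a b c : ℝ} (ha : ‖a‖ ≤ 1) (hc : 0 < c) (hb : c ≤ b) :
    ‖a / b‖ ≤ 1 / c := by
  rw [norm_div]
  exact div_le_div₀ zero_le_one ha hc (hb.trans (Real.le_norm_self b))

lemma stronglyMeasurable_comap_comp [MeasurableSpace 𝒳] (X : Ω → 𝒳) {f : 𝒳 → ℝ}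
    (hf : Measurable f) :
    StronglyMeasurable[MeasurableSpace.comap X inferInstance] fun ω => f (X ω) :=
  (hf.comp (comap_measurable X)).stronglyMeasurable

variable {m m₀ : MeasurableSpace Ω} {P : Measure Ω}

lemma condExp_one_sub [IsFiniteMeasure P] (hm : m ≤ m₀) {A : Ω → ℝ} (hA : Integrable A P) :
    P[fun ω => 1 - A ω | m] =ᵐ[P] fun ω => 1 - P[A | m] ω := by
  have h := condExp_sub (integrable_const (1 : ℝ)) hA m
  rwa [condExp_const hm] at h

lemma condExp_mul_sub_of_stronglyMeasurable {B Y g : Ω → ℝ} (hg : StronglyMeasurable[m] g)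
    (hB : Integrable B P) (hBY : Integrable (fun ω => B ω * Y ω) P)
    (hgB : Integrable (fun ω => g ω * B ω) P) :
    P[fun ω => B ω * (Y ω - g ω) | m]
      =ᵐ[P] P[fun ω => B ω * Y ω | m] - g * P[B | m] := by
  have hsplit : (fun ω => B ω * (Y ω - g ω)) = B * Y - g * B := by
    ext ω; simp only [Pi.sub_apply, Pi.mul_apply]; ring
  rw [hsplit]
  exact (condExp_sub hBY hgB m).trans
    (EventuallyEq.rfl.sub (condExp_mul_of_stronglyMeasurable_left hg hgB hB))

end

section

variable {Ω 𝒳 : Type*} [MeasurableSpace Ω] [MeasurableSpace 𝒳] {P : Measure Ω}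
  {X : Ω → 𝒳} {B Y Z : Ω → ℝ} {w e m μ : 𝒳 → ℝ} {c : ℝ}

lemma MeasureTheory.Integrable.comp_div_mul (hX : Measurable X) (hZ : Integrable Z P) (hc : 0 < c)
    (he : Measurable e) (hce : ∀ x, c ≤ e x) (hw : Measurable w) (hw1 : ∀ x, ‖w x‖ ≤ 1) :
    Integrable (fun ω => w (X ω) / e (X ω) * Z ω) P :=
  hZ.bdd_mul ((hw.div he).comp hX).aestronglyMeasurable
    (ae_of_all _ fun _ => norm_div_le_one_div (hw1 _) hc (hce _))

lemma integrable_aipwArm (hX : Measurable X) (hB : Measurable B) (hB1 : ∀ ω, ‖B ω‖ ≤ 1)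
    (hY : Integrable Y P) (hc : 0 < c) (he : Measurable e) (hce : ∀ x, c ≤ e x)
    (hw : Measurable w) (hw1 : ∀ x, ‖w x‖ ≤ 1) (hmX : Integrable (fun ω => m (X ω)) P) :
    Integrable (aipwArm X B Y w e m) P :=
  (((hY.sub hmX).bdd_mul hB.aestronglyMeasurable (ae_of_all _ hB1)).comp_div_mul
      hX hc he hce hw hw1).add
    (hmX.bdd_mul (hw.comp hX).aestronglyMeasurable (ae_of_all _ fun _ => hw1 _))

theorem condExp_aipwArm [IsFiniteMeasure P] (hX : Measurable X) (hB : Measurable B)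
    (hB1 : ∀ ω, ‖B ω‖ ≤ 1) (hY : Integrable Y P) (hc : 0 < c) (he : Measurable e)
    (hce : ∀ x, c ≤ e x) (hw : Measurable w) (hw1 : ∀ x, ‖w x‖ ≤ 1) (hm : Measurable m)
    (hmX : Integrable (fun ω => m (X ω)) P)
    (hBe : P[B | MeasurableSpace.comap X inferInstance] =ᵐ[P] fun ω => e (X ω))
    (hBY : P[fun ω => B ω * Y ω | MeasurableSpace.comap X inferInstance]
      =ᵐ[P] fun ω => μ (X ω) * e (X ω)) :
    P[aipwArm X B Y w e m | MeasurableSpace.comap X inferInstance]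
      =ᵐ[P] fun ω => w (X ω) * μ (X ω) := by
  have hB' : ∀ᵐ ω ∂P, ‖B ω‖ ≤ 1 := ae_of_all _ hB1
  have hresI : Integrable (fun ω => B ω * (Y ω - m (X ω))) P :=
    (hY.sub hmX).bdd_mul hB.aestronglyMeasurable hB'
  have hweightI := hresI.comp_div_mul hX hc he hce hw hw1
  have hplugI : Integrable (fun ω => w (X ω) * m (X ω)) P :=
    hmX.bdd_mul (hw.comp hX).aestronglyMeasurable (ae_of_all _ fun _ => hw1 _)
  have hres := condExp_mul_sub_of_stronglyMeasurable (P := P) (Y := Y)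
    (stronglyMeasurable_comap_comp X hm)
    ((integrable_const 1).mono' hB.aestronglyMeasurable hB')
    (hY.bdd_mul hB.aestronglyMeasurable hB') (hmX.mul_bdd hB.aestronglyMeasurable hB')
  have hpull : P[fun ω => w (X ω) / e (X ω) * (B ω * (Y ω - m (X ω))) |
      MeasurableSpace.comap X inferInstance] =ᵐ[P] fun ω => w (X ω) / e (X ω) *
        P[fun ω => B ω * (Y ω - m (X ω)) | MeasurableSpace.comap X inferInstance] ω :=
    condExp_mul_of_stronglyMeasurable_left (stronglyMeasurable_comap_comp X (hw.div he))
      hweightI hresI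
  have hplug := condExp_of_stronglyMeasurable hX.comap_le
    (stronglyMeasurable_comap_comp X (hw.mul hm)) hplugI
  refine (condExp_add hweightI hplugI _).trans ?_
  filter_upwards [hpull, hres, hBe, hBY] with ω hpull hres hBe hBY
  have he0 : e (X ω) ≠ 0 := (hc.trans_le (hce _)).ne'
  simp only [Pi.add_apply, Pi.mul_apply, Pi.sub_apply, hplug] at *
  rw [hpull, hres, hBe, hBY]
  field_simp
  ring

end

theorem stmt_7_general {Ω 𝒳 : Type*} [MeasurableSpace Ω] [MeasurableSpace 𝒳]
    (P : Measure Ω) [IsProbabilityMeasure P]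
    (X : Ω → 𝒳) (A Y : Ω → ℝ)
    (hX : Measurable X) (hA : Measurable A)
    (hAbin : ∀ ω, A ω = 0 ∨ A ω = 1) (hYL2 : MemLp Y 2 P)
    (c : ℝ) (hc : c ∈ Set.Ioo (0 : ℝ) (1 / 2))
    (π₁ : 𝒳 → ℝ) (hπ₁m : Measurable π₁) (hπ₁r : ∀ x, π₁ x ∈ Set.Icc c (1 - c))
    (hcondA : P[A | MeasurableSpace.comap X inferInstance]
      =ᵐ[P] fun ω => π₁ (X ω))
    (μ₁ μ₀ : 𝒳 → ℝ)
    (hcond1 : P[fun ω => A ω * Y ω | MeasurableSpace.comap X inferInstance]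
      =ᵐ[P] fun ω => μ₁ (X ω) * π₁ (X ω))
    (hcond0 : P[fun ω => (1 - A ω) * Y ω | MeasurableSpace.comap X inferInstance]
      =ᵐ[P] fun ω => μ₀ (X ω) * (1 - π₁ (X ω))) :
    ∀ D : 𝒳 → ℝ, Measurable D → (∀ x, D x ∈ Set.Icc (0 : ℝ) 1) →
    ∀ m₁ m₀ : 𝒳 → ℝ, Measurable m₁ → Measurable m₀ →
      MemLp (fun ω => m₁ (X ω)) 2 P → MemLp (fun ω => m₀ (X ω)) 2 P →
      ∫ ω, aipw X A Y D π₁ m₁ m₀ ω ∂P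
        = ∫ ω, (D (X ω) * μ₁ (X ω) + (1 - D (X ω)) * μ₀ (X ω)) ∂P := by
  intro D hD hDr m₁ m₀ hm₁ hm₀ hm₁L2 hm₀L2
  have hA01 : ∀ ω, A ω ∈ Set.Icc (0 : ℝ) 1 := fun ω => by
    rcases hAbin ω with h | h <;> simp [h]
  have hA1 := fun ω => norm_le_one_of_mem_Icc_s7 (hA01 ω)
  have h1A1 := fun ω => norm_le_one_of_mem_Icc_s7 (Set.Icc.mem_iff_one_sub_mem.1 (hA01 ω))
  have hD1 := fun x => norm_le_one_of_mem_Icc_s7 (hDr x)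
  have h1D1 := fun x => norm_le_one_of_mem_Icc_s7 (Set.Icc.mem_iff_one_sub_mem.1 (hDr x))
  have hc1π : ∀ x, c ≤ 1 - π₁ x := fun x => by linarith [(hπ₁r x).2]
  have hYi := hYL2.integrable one_le_two
  have hm₁i := hm₁L2.integrable one_le_two
  have hm₀i := hm₀L2.integrable one_le_two
  have hF := hX.comap_le
  have hcondA' : P[fun ω => 1 - A ω | MeasurableSpace.comap X inferInstance]
      =ᵐ[P] fun ω => 1 - π₁ (X ω) := by
    filter_upwards [condExp_one_sub hF
      ((integrable_const 1).mono' hA.aestronglyMeasurable (ae_of_all _ hA1)), hcondA]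
      with ω h hA
    rw [h, hA]
  have harm₁ := condExp_aipwArm hX hA hA1 hYi hc.1 hπ₁m (fun x => (hπ₁r x).1) hD hD1 hm₁ hm₁i
    hcondA hcond1
  have harm₀ := condExp_aipwArm (B := fun ω => 1 - A ω) (w := fun x => 1 - D x)
    (e := fun x => 1 - π₁ x) hX (measurable_const.sub hA) h1A1 hYi hc.1
    (measurable_const.sub hπ₁m) hc1π (measurable_const.sub hD) h1D1 hm₀ hm₀i hcondA' hcond0
  have hsum := condExp_add
    (integrable_aipwArm hX hA hA1 hYi hc.1 hπ₁m (fun x => (hπ₁r x).1) hD hD1 hm₁i)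
    (integrable_aipwArm (B := fun ω => 1 - A ω) (w := fun x => 1 - D x)
      (e := fun x => 1 - π₁ x) hX (measurable_const.sub hA) h1A1 hYi hc.1
      (measurable_const.sub hπ₁m) hc1π (measurable_const.sub hD) h1D1 hm₀i)
    (MeasurableSpace.comap X inferInstance)
  rw [← integral_condExp hF, aipw_eq_aipwArm_add_aipwArm X Y D π₁ m₁ m₀ hAbin]
  refine integral_congr_ae ?_
  filter_upwards [hsum, harm₁, harm₀] with ω hsum harm₁ harm₀
  rw [hsum, Pi.add_apply, harm₁, harm₀]

/-- Double robustness with correct propensity score: for every measurable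
`D : 𝒳 → [0,1]` and every pair of working outcome models `m₁, m₀ : 𝒳 → ℝ` with
`m₁(X), m₀(X) ∈ L²`, `E[ψ(D, π₁, (m₁, m₀))] = V(D)`, i.e. the AIPW score evaluated at
the true propensity score `π₁` is unbiased for `V(D)` regardless of the outcome models. -/
theorem stmt_7 {Ω 𝒳 : Type*} [MeasurableSpace Ω] [MeasurableSpace 𝒳]
    (P : Measure Ω) [IsProbabilityMeasure P]
    (X : Ω → 𝒳) (A Y : Ω → ℝ)
    (hX : Measurable X) (hA : Measurable A) (hY : Measurable Y)
    (hAbin : ∀ ω, A ω = 0 ∨ A ω = 1) (hYL2 : MemLp Y 2 P)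
    (c : ℝ) (hc : c ∈ Set.Ioo (0 : ℝ) (1 / 2))
    (π₁ : 𝒳 → ℝ) (hπ₁m : Measurable π₁) (hπ₁r : ∀ x, π₁ x ∈ Set.Icc c (1 - c))
    (hcondA : P[A | MeasurableSpace.comap X inferInstance]
      =ᵐ[P] fun ω => π₁ (X ω))
    (μ₁ μ₀ : 𝒳 → ℝ) (hμ₁m : Measurable μ₁) (hμ₀m : Measurable μ₀)
    (hμ₁L2 : MemLp (fun ω => μ₁ (X ω)) 2 P) (hμ₀L2 : MemLp (fun ω => μ₀ (X ω)) 2 P)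
    (hcond1 : P[fun ω => A ω * Y ω | MeasurableSpace.comap X inferInstance]
      =ᵐ[P] fun ω => μ₁ (X ω) * π₁ (X ω))
    (hcond0 : P[fun ω => (1 - A ω) * Y ω | MeasurableSpace.comap X inferInstance]
      =ᵐ[P] fun ω => μ₀ (X ω) * (1 - π₁ (X ω))) :
    ∀ D : 𝒳 → ℝ, Measurable D → (∀ x, D x ∈ Set.Icc (0 : ℝ) 1) →
    ∀ m₁ m₀ : 𝒳 → ℝ, Measurable m₁ → Measurable m₀ →
      MemLp (fun ω => m₁ (X ω)) 2 P → MemLp (fun ω => m₀ (X ω)) 2 P →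
      ∫ ω, aipw X A Y D π₁ m₁ m₀ ω ∂P
        = ∫ ω, (D (X ω) * μ₁ (X ω) + (1 - D (X ω)) * μ₀ (X ω)) ∂P :=
  stmt_7_general P X A Y hX hA hAbin hYL2 c hc π₁ hπ₁m hπ₁r hcondA μ₁ μ₀ hcond1 hcond0
end

section
/- Variance comparison with the subbagging limit: under homoscedasticity, with D_half := 1{τ>0} + (1/2)·1{τ=0} (the limiting decision of the subbagging estimator) and D_ad := 1{τ>0} + π₁·1{τ=0}, Var(ψ(D_half, π₁, (μ₁,μ₀))) − Var(ψ(D_ad, π₁, (μ₁,μ₀))) = E[(1/(4·π₁(X)) + 1/(4·(1−π₁(X))) − 1)·σ²(X)·1{τ(X)=0}] ≥ 0. If in addition σ²(X) > 0 almost surely, equality holds if and only if P(π₁(X)=1/2 or τ(X)≠0) = 1. -/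
/-! Since `A ∈ {0, 1}`, the AIPW score splits as
`ψ(D) = g(X) + (D/π₁)(X)·ε₁ + ((1-D)/(1-π₁))(X)·ε₀` with `g = D μ₁ + (1-D) μ₀` and
residuals `ε₁ = A (Y - μ₁(X))`, `ε₀ = (1-A) (Y - μ₀(X))`.
The residuals are conditionally centred given `X`, have product zero, and have conditional
variances `σ₁² π₁` and `σ₀² (1-π₁)`, so
`Var ψ(D) = Var g(X) + E[D² σ₁² / π₁ + (1-D)² σ₀² / (1-π₁)](X)`.
Both tie-breaking rules give `g = max μ₁ μ₀` and differ only on `{τ = 0}`, where, under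
homoscedasticity, the second term drops from `(1/(4π₁) + 1/(4(1-π₁))) σ²` to `σ²`; the
difference is `(2π₁ - 1)² σ² / (4π₁(1-π₁)) ≥ 0`. -/

open MeasureTheory ProbabilityTheory Filter Topology
open scoped Classical

section ConditionallyCentred

variable {Ω : Type*} {m m₀ : MeasurableSpace Ω} {P : Measure Ω}

theorem MeasureTheory.MemLp.bdd_mul {p : ENNReal} {f a : Ω → ℝ} (hf : MemLp f p P)
    (ha : AEStronglyMeasurable a P) {C : ℝ} (haC : ∀ᵐ ω ∂P, ‖a ω‖ ≤ C) : MemLp (a * f) p P :=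
  hf.mul (r := p) (memLp_top_of_bound ha C haC)

theorem variance_add_of_condExp_eq_zero [IsProbabilityMeasure P] (hm : m ≤ m₀) {g r : Ω → ℝ}
    (hg : MemLp g 2 P) (hgm : StronglyMeasurable[m] g) (hr : MemLp r 2 P)
    (hr0 : P[r|m] =ᵐ[P] 0) :
    Var[g + r; P] = Var[g; P] + ∫ ω, r ω ^ 2 ∂P := by
  have hmean : P[r] = 0 := by
    rw [← integral_condExp hm, integral_congr_ae hr0]
    simp
  have hcross : P[g * r] = 0 := by
    have hgr := condExp_mul_of_stronglyMeasurable_left hgm (hg.integrable_mul hr)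
      (hr.integrable one_le_two)
    rw [← integral_condExp hm, integral_congr_ae (hgr.trans (EventuallyEq.rfl.mul hr0))]
    simp
  rw [variance_add hg hr, covariance_eq_sub hg hr, variance_eq_sub hr, hcross, hmean]
  simp

variable (m P) in
/-- One treatment arm: `B` indicates the arm, which has conditional probability `E` given `m`,
and on which the outcome `Y` has conditional mean `M` and conditional variance `S`. -/
structure ArmModel (B Y M S E : Ω → ℝ) : Prop where
  indicator_eq : ∀ ω, B ω = 0 ∨ B ω = 1
  aestronglyMeasurable_indicator : AEStronglyMeasurable B P
  memLp_outcome : MemLp Y 2 P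
  memLp_mean : MemLp M 2 P
  stronglyMeasurable_mean : StronglyMeasurable[m] M
  condExp_indicator : P[B|m] =ᵐ[P] E
  condExp_mul_outcome : P[B * Y|m] =ᵐ[P] M * E
  condExp_mul_outcome_sq : P[B * Y ^ 2|m] =ᵐ[P] (M ^ 2 + S) * E

namespace ArmModel

variable {B Y M S E : Ω → ℝ}

theorem norm_indicator_le_one (h : ArmModel m P B Y M S E) (ω : Ω) : ‖B ω‖ ≤ 1 := by
  rcases h.indicator_eq ω with hB | hB <;> simp [hB]

theorem integrable_indicator [IsFiniteMeasure P] (h : ArmModel m P B Y M S E) :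
    Integrable B P :=
  (integrable_const 1).mono' h.aestronglyMeasurable_indicator
    (ae_of_all _ h.norm_indicator_le_one)

theorem integrable_mul_indicator (h : ArmModel m P B Y M S E) {f : Ω → ℝ}
    (hf : Integrable f P) : Integrable (f * B) P :=
  hf.mul_bdd h.aestronglyMeasurable_indicator (ae_of_all _ h.norm_indicator_le_one)

theorem memLp_indicator_mul (h : ArmModel m P B Y M S E) {p : ENNReal} {f : Ω → ℝ}
    (hf : MemLp f p P) : MemLp (B * f) p P :=
  hf.bdd_mul h.aestronglyMeasurable_indicator (ae_of_all _ h.norm_indicator_le_one)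

theorem memLp_residual (h : ArmModel m P B Y M S E) : MemLp (B * (Y - M)) 2 P :=
  h.memLp_indicator_mul (h.memLp_outcome.sub h.memLp_mean)

theorem condExp_mul_indicator [IsFiniteMeasure P] (h : ArmModel m P B Y M S E) {f : Ω → ℝ}
    (hf : StronglyMeasurable[m] f) (hfi : Integrable f P) : P[f * B|m] =ᵐ[P] f * E :=
  (condExp_mul_of_stronglyMeasurable_left hf (h.integrable_mul_indicator hfi)
    h.integrable_indicator).trans (EventuallyEq.rfl.mul h.condExp_indicator)

theorem condExp_residual [IsFiniteMeasure P] (h : ArmModel m P B Y M S E) :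
    P[B * (Y - M)|m] =ᵐ[P] 0 := by
  have hBY : Integrable (B * Y) P := (h.memLp_indicator_mul h.memLp_outcome).integrable one_le_two
  have hM := h.memLp_mean.integrable one_le_two
  calc P[B * (Y - M)|m] = P[B * Y - M * B|m] := by congr 1; ring
    _ =ᵐ[P] P[B * Y|m] - P[M * B|m] := condExp_sub hBY (h.integrable_mul_indicator hM) m
    _ =ᵐ[P] M * E - M * E :=
        h.condExp_mul_outcome.sub (h.condExp_mul_indicator h.stronglyMeasurable_mean hM)
    _ = 0 := sub_self _

theorem condExp_residual_sq [IsFiniteMeasure P] (h : ArmModel m P B Y M S E) :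
    P[(B * (Y - M)) ^ 2|m] =ᵐ[P] S * E := by
  have hM := h.stronglyMeasurable_mean
  have hBY : Integrable (B * Y) P := (h.memLp_indicator_mul h.memLp_outcome).integrable one_le_two
  have hBY2 : Integrable (B * Y ^ 2) P :=
    h.memLp_outcome.integrable_sq.bdd_mul h.aestronglyMeasurable_indicator
      (ae_of_all _ h.norm_indicator_le_one)
  have hMBY : Integrable ((2 * M) * (B * Y)) P :=
    (h.memLp_mean.const_mul 2).integrable_mul (h.memLp_indicator_mul h.memLp_outcome)
  have hM2B : Integrable (M ^ 2 * B) P := h.integrable_mul_indicator h.memLp_mean.integrable_sq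
  have hsq : (B * (Y - M)) ^ 2 = B * Y ^ 2 - (2 * M) * (B * Y) + M ^ 2 * B := by
    funext ω
    rcases h.indicator_eq ω with hB | hB <;>
      simp only [Pi.mul_apply, Pi.pow_apply, Pi.add_apply, Pi.sub_apply, Pi.ofNat_apply, hB] <;>
      ring
  calc P[(B * (Y - M)) ^ 2|m] = P[B * Y ^ 2 - (2 * M) * (B * Y) + M ^ 2 * B|m] := by rw [hsq]
    _ =ᵐ[P] P[B * Y ^ 2|m] - P[(2 * M) * (B * Y)|m] + P[M ^ 2 * B|m] :=
        (condExp_add (hBY2.sub hMBY) hM2B m).trans ((condExp_sub hBY2 hMBY m).add .rfl)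
    _ =ᵐ[P] (M ^ 2 + S) * E - (2 * M) * (M * E) + M ^ 2 * E :=
        (h.condExp_mul_outcome_sq.sub ((condExp_mul_of_stronglyMeasurable_left (hM.const_mul 2)
          hMBY hBY).trans (EventuallyEq.rfl.mul h.condExp_mul_outcome))).add
          (h.condExp_mul_indicator (hM.pow 2) h.memLp_mean.integrable_sq)
    _ = S * E := by ring

theorem one_sub [IsFiniteMeasure P] (h : ArmModel m P B Y M S E) (hm : m ≤ m₀) {M' S' : Ω → ℝ}
    (hM' : MemLp M' 2 P) (hM'm : StronglyMeasurable[m] M')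
    (hY : P[(1 - B) * Y|m] =ᵐ[P] M' * (1 - E))
    (hY2 : P[(1 - B) * Y ^ 2|m] =ᵐ[P] (M' ^ 2 + S') * (1 - E)) :
    ArmModel m P (1 - B) Y M' S' (1 - E) where
  indicator_eq ω := by rcases h.indicator_eq ω with hB | hB <;> simp [hB]
  aestronglyMeasurable_indicator := aestronglyMeasurable_const.sub h.aestronglyMeasurable_indicator
  memLp_outcome := h.memLp_outcome
  memLp_mean := hM'
  stronglyMeasurable_mean := hM'm
  condExp_indicator := by
    filter_upwards [condExp_sub (f := 1) (integrable_const 1) h.integrable_indicator m,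
      h.condExp_indicator] with ω h1 h2
    rw [h1, Pi.sub_apply, h2, Pi.one_def, condExp_const hm]
    rfl
  condExp_mul_outcome := hY
  condExp_mul_outcome_sq := hY2

end ArmModel

variable [IsFiniteMeasure P] {a b ε₁ ε₀ : Ω → ℝ} {C : ℝ}

theorem condExp_mul_add_mul_eq_zero (hm : m ≤ m₀) (ha : StronglyMeasurable[m] a)
    (haC : ∀ ω, ‖a ω‖ ≤ C) (hb : StronglyMeasurable[m] b) (hbC : ∀ ω, ‖b ω‖ ≤ C)
    (hε₁ : Integrable ε₁ P) (hε₀ : Integrable ε₀ P) (h₁ : P[ε₁|m] =ᵐ[P] 0)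
    (h₀ : P[ε₀|m] =ᵐ[P] 0) :
    P[a * ε₁ + b * ε₀|m] =ᵐ[P] 0 := by
  filter_upwards [condExp_add (f := a * ε₁) (g := b * ε₀)
      (hε₁.bdd_mul (ha.mono hm).aestronglyMeasurable (ae_of_all _ haC))
      (hε₀.bdd_mul (hb.mono hm).aestronglyMeasurable (ae_of_all _ hbC)) m,
    condExp_stronglyMeasurable_mul_of_bound hm ha hε₁ C (ae_of_all _ haC),
    condExp_stronglyMeasurable_mul_of_bound hm hb hε₀ C (ae_of_all _ hbC), h₁, h₀]
    with ω h h₁ h₀ h₁' h₀'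
  simp [h, h₁, h₀, h₁', h₀']

theorem condExp_sq_mul_add_mul (hm : m ≤ m₀) {V₁ V₀ : Ω → ℝ} (ha : StronglyMeasurable[m] a)
    (haC : ∀ ω, ‖a ω‖ ≤ C) (hb : StronglyMeasurable[m] b) (hbC : ∀ ω, ‖b ω‖ ≤ C)
    (hε₁ : MemLp ε₁ 2 P) (hε₀ : MemLp ε₀ 2 P) (h₁ : P[ε₁ ^ 2|m] =ᵐ[P] V₁)
    (h₀ : P[ε₀ ^ 2|m] =ᵐ[P] V₀) (horth : ε₁ * ε₀ = 0) :
    P[(a * ε₁ + b * ε₀) ^ 2|m] =ᵐ[P] a ^ 2 * V₁ + b ^ 2 * V₀ := by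
  have hsq : (a * ε₁ + b * ε₀) ^ 2 = a ^ 2 * ε₁ ^ 2 + b ^ 2 * ε₀ ^ 2 := by
    funext ω
    have h := congrFun horth ω
    simp only [Pi.mul_apply, Pi.zero_apply] at h
    simp only [Pi.pow_apply, Pi.add_apply, Pi.mul_apply]
    linear_combination (2 * a ω * b ω) * h
  have haC2 : ∀ ω, ‖(a ^ 2) ω‖ ≤ C ^ 2 := fun ω => by
    simpa [norm_pow] using pow_le_pow_left₀ (norm_nonneg _) (haC ω) 2
  have hbC2 : ∀ ω, ‖(b ^ 2) ω‖ ≤ C ^ 2 := fun ω => by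
    simpa [norm_pow] using pow_le_pow_left₀ (norm_nonneg _) (hbC ω) 2
  rw [hsq]
  filter_upwards [condExp_add (f := a ^ 2 * ε₁ ^ 2) (g := b ^ 2 * ε₀ ^ 2)
      (hε₁.integrable_sq.bdd_mul ((ha.pow 2).mono hm).aestronglyMeasurable (ae_of_all _ haC2))
      (hε₀.integrable_sq.bdd_mul ((hb.pow 2).mono hm).aestronglyMeasurable (ae_of_all _ hbC2)) m,
    condExp_stronglyMeasurable_mul_of_bound (g := ε₁ ^ 2) hm (ha.pow 2) hε₁.integrable_sq _
      (ae_of_all _ haC2),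
    condExp_stronglyMeasurable_mul_of_bound (g := ε₀ ^ 2) hm (hb.pow 2) hε₀.integrable_sq _
      (ae_of_all _ hbC2), h₁, h₀] with ω h h₁ h₀ h₁' h₀'
  simp [h, h₁, h₀, h₁', h₀']

end ConditionallyCentred

theorem norm_div_le_inv_of_mem_Icc {d p c : ℝ} (hc : 0 < c) (hd : d ∈ Set.Icc 0 1) (hp : c ≤ p) :
    ‖d / p‖ ≤ c⁻¹ := by
  have hp0 : 0 ≤ p⁻¹ := inv_nonneg.mpr (hc.trans_le hp).le
  rw [Real.norm_eq_abs, abs_of_nonneg (div_nonneg hd.1 (hc.trans_le hp).le), div_eq_mul_inv]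
  simpa using mul_le_mul hd.2 (inv_anti₀ hc hp) hp0 zero_le_one

/-- `aipwCondVar D π₁ σ₁sq σ₀sq x` is `Var[ψ(D, π₁, (μ₁, μ₀)) | X = x]`. -/
noncomputable def aipwCondVar {𝒳 : Type*} (D π₁ σ₁sq σ₀sq : 𝒳 → ℝ) (x : 𝒳) : ℝ :=
  D x ^ 2 / π₁ x * σ₁sq x + (1 - D x) ^ 2 / (1 - π₁ x) * σ₀sq x

/-- The excess conditional variance, per unit of noise, of breaking a tie with weight `1/2`
rather than with the propensity `p`. -/
noncomputable def tiePenalty (p : ℝ) : ℝ := 1 / (4 * p) + 1 / (4 * (1 - p)) - 1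

theorem tiePenalty_eq {p : ℝ} (hp : p ≠ 0) (hp' : 1 - p ≠ 0) :
    tiePenalty p = (2 * p - 1) ^ 2 / (4 * p * (1 - p)) := by
  rw [tiePenalty]
  field_simp
  ring

theorem tiePenalty_nonneg {p : ℝ} (hp : 0 < p) (hp' : 0 < 1 - p) : 0 ≤ tiePenalty p := by
  rw [tiePenalty_eq hp.ne' hp'.ne']
  positivity

theorem tiePenalty_mul_mul_ite_eq_zero_iff {p s τ : ℝ} (hp : 0 < p) (hp' : 0 < 1 - p)
    (hs : 0 < s) : tiePenalty p * s * (if τ = 0 then 1 else 0) = 0 ↔ p = 1 / 2 ∨ τ ≠ 0 := by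
  by_cases hτ : τ = 0
  · have hden : 4 * p * (1 - p) ≠ 0 := by positivity
    simp only [hτ, if_true, mul_one, mul_eq_zero, hs.ne', or_false, ne_eq, not_true,
      tiePenalty_eq hp.ne' hp'.ne', div_eq_zero_iff, hden, pow_eq_zero_iff two_ne_zero]
    constructor <;> intro h <;> linarith
  · simp [hτ]

section TieBreak

variable {𝒳 : Type*} {μ₁ μ₀ θ : 𝒳 → ℝ}

/-- With `θ = 1/2` this is the subbagging limit `D_half`, with `θ = π₁` it is `D_ad`. -/
noncomputable def tieBreakRule (μ₁ μ₀ θ : 𝒳 → ℝ) (x : 𝒳) : ℝ :=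
  (if 0 < μ₁ x - μ₀ x then 1 else 0) + θ x * (if μ₁ x - μ₀ x = 0 then 1 else 0)

theorem measurable_tieBreakRule [MeasurableSpace 𝒳] (hμ₁ : Measurable μ₁) (hμ₀ : Measurable μ₀)
    (hθ : Measurable θ) : Measurable (tieBreakRule μ₁ μ₀ θ) := by
  have hτ := hμ₁.sub hμ₀
  exact (Measurable.ite (measurableSet_lt measurable_const hτ) measurable_const
    measurable_const).add
    (hθ.mul (Measurable.ite (hτ (measurableSet_singleton 0)) measurable_const measurable_const))

theorem tieBreakRule_of_eq {x : 𝒳} (h : μ₁ x - μ₀ x = 0) : tieBreakRule μ₁ μ₀ θ x = θ x := by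
  simp [tieBreakRule, h]

theorem tieBreakRule_of_ne {x : 𝒳} (h : μ₁ x - μ₀ x ≠ 0) (θ' : 𝒳 → ℝ) :
    tieBreakRule μ₁ μ₀ θ x = tieBreakRule μ₁ μ₀ θ' x := by
  simp [tieBreakRule, h]

theorem tieBreakRule_mem_Icc {x : 𝒳} (hθ : θ x ∈ Set.Icc 0 1) :
    tieBreakRule μ₁ μ₀ θ x ∈ Set.Icc 0 1 := by
  by_cases h : μ₁ x - μ₀ x = 0
  · rwa [tieBreakRule_of_eq h]
  · rw [tieBreakRule, if_neg h]
    split_ifs <;> norm_num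

theorem tieBreakRule_mul_add_one_sub_mul (x : 𝒳) :
    tieBreakRule μ₁ μ₀ θ x * μ₁ x + (1 - tieBreakRule μ₁ μ₀ θ x) * μ₀ x = max (μ₁ x) (μ₀ x) := by
  by_cases h : μ₁ x - μ₀ x = 0
  · rw [tieBreakRule_of_eq h, sub_eq_zero.mp h, max_self]
    ring
  · rw [tieBreakRule, if_neg h]
    split_ifs with hpos
    · simp [max_eq_left (sub_pos.mp hpos).le]
    · simp [max_eq_right (sub_nonpos.mp (not_lt.mp hpos))]

theorem aipwCondVar_tieBreakRule_half_sub {π₁ σsq : 𝒳 → ℝ} {x : 𝒳} (hp : π₁ x ≠ 0)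
    (hp' : 1 - π₁ x ≠ 0) :
    aipwCondVar (tieBreakRule μ₁ μ₀ fun _ => 1 / 2) π₁ σsq σsq x
      - aipwCondVar (tieBreakRule μ₁ μ₀ π₁) π₁ σsq σsq x
      = tiePenalty (π₁ x) * σsq x * (if μ₁ x - μ₀ x = 0 then 1 else 0) := by
  rw [aipwCondVar, aipwCondVar, tiePenalty]
  by_cases h : μ₁ x - μ₀ x = 0
  · rw [tieBreakRule_of_eq h, tieBreakRule_of_eq h, if_pos h]
    field_simp
    ring
  · rw [tieBreakRule_of_ne h π₁, if_neg h]
    ring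

end TieBreak

section AIPW

variable {Ω 𝒳 : Type*} {m m₀ : MeasurableSpace Ω} {P : Measure Ω}
  {X : Ω → 𝒳} {A Y : Ω → ℝ} {D π₁ μ₁ μ₀ σ₁sq σ₀sq : 𝒳 → ℝ} {c : ℝ}

theorem aipw_eq_add_mul_add_mul (hA : ∀ ω, A ω = 0 ∨ A ω = 1)
    (hπ₁ : ∀ x, π₁ x ≠ 0 ∧ 1 - π₁ x ≠ 0) :
    aipw X A Y D π₁ μ₁ μ₀ = (fun ω => D (X ω) * μ₁ (X ω) + (1 - D (X ω)) * μ₀ (X ω)) +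
      ((fun ω => D (X ω) / π₁ (X ω)) * (A * (Y - fun ω => μ₁ (X ω))) +
        (fun ω => (1 - D (X ω)) / (1 - π₁ (X ω))) * ((1 - A) * (Y - fun ω => μ₀ (X ω)))) := by
  funext ω
  obtain ⟨h1, h0⟩ := hπ₁ (X ω)
  rcases hA ω with h | h <;> simp [aipw, h] <;> field_simp <;> ring

theorem variance_aipw [MeasurableSpace 𝒳] [IsProbabilityMeasure P] (hm : m ≤ m₀)
    (hX : Measurable[m] X)
    (h₁ : ArmModel m P A Y (fun ω => μ₁ (X ω)) (fun ω => σ₁sq (X ω)) (fun ω => π₁ (X ω)))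
    (h₀ : ArmModel m P (1 - A) Y (fun ω => μ₀ (X ω)) (fun ω => σ₀sq (X ω))
      (1 - fun ω => π₁ (X ω)))
    (hc : 0 < c) (hπ₁m : Measurable π₁) (hπ₁ : ∀ x, π₁ x ∈ Set.Icc c (1 - c))
    (hDm : Measurable D) (hD : ∀ x, D x ∈ Set.Icc 0 1) :
    Var[aipw X A Y D π₁ μ₁ μ₀; P] =
      Var[fun ω => D (X ω) * μ₁ (X ω) + (1 - D (X ω)) * μ₀ (X ω); P] +
        ∫ ω, aipwCondVar D π₁ σ₁sq σ₀sq (X ω) ∂P := by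
  have hπ : ∀ x, π₁ x ≠ 0 ∧ 1 - π₁ x ≠ 0 := fun x =>
    ⟨(hc.trans_le (hπ₁ x).1).ne', by linarith [(hπ₁ x).2]⟩
  have hD' : ∀ x, 1 - D x ∈ Set.Icc 0 1 := fun x =>
    ⟨by linarith [(hD x).2], by linarith [(hD x).1]⟩
  have hbdd : ∀ {d : ℝ}, d ∈ Set.Icc 0 1 → ‖d‖ ≤ 1 := fun hd => by
    simpa using norm_div_le_inv_of_mem_Icc one_pos hd le_rfl
  have hDX : StronglyMeasurable[m] fun ω => D (X ω) := (hDm.comp hX).stronglyMeasurable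
  have h1DX : StronglyMeasurable[m] fun ω => 1 - D (X ω) := stronglyMeasurable_const.sub hDX
  have ha : StronglyMeasurable[m] fun ω => D (X ω) / π₁ (X ω) :=
    ((hDm.div hπ₁m).comp hX).stronglyMeasurable
  have hb : StronglyMeasurable[m] fun ω => (1 - D (X ω)) / (1 - π₁ (X ω)) :=
    (((measurable_const.sub hDm).div (measurable_const.sub hπ₁m)).comp hX).stronglyMeasurable
  have haC : ∀ ω, ‖D (X ω) / π₁ (X ω)‖ ≤ c⁻¹ := fun ω =>
    norm_div_le_inv_of_mem_Icc hc (hD _) (hπ₁ _).1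
  have hbC : ∀ ω, ‖(1 - D (X ω)) / (1 - π₁ (X ω))‖ ≤ c⁻¹ := fun ω =>
    norm_div_le_inv_of_mem_Icc hc (hD' _) (by linarith [(hπ₁ (X ω)).2])
  have hg : MemLp (fun ω => D (X ω) * μ₁ (X ω) + (1 - D (X ω)) * μ₀ (X ω)) 2 P :=
    (h₁.memLp_mean.bdd_mul (hDX.mono hm).aestronglyMeasurable
      (ae_of_all _ fun ω => hbdd (hD (X ω)))).add
    (h₀.memLp_mean.bdd_mul (h1DX.mono hm).aestronglyMeasurable
      (ae_of_all _ fun ω => hbdd (hD' (X ω))))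
  have hgm : StronglyMeasurable[m] fun ω => D (X ω) * μ₁ (X ω) + (1 - D (X ω)) * μ₀ (X ω) :=
    (hDX.mul h₁.stronglyMeasurable_mean).add (h1DX.mul h₀.stronglyMeasurable_mean)
  have hr := (h₁.memLp_residual.bdd_mul (ha.mono hm).aestronglyMeasurable (ae_of_all _ haC)).add
    (h₀.memLp_residual.bdd_mul (hb.mono hm).aestronglyMeasurable (ae_of_all _ hbC))
  have horth : A * (Y - fun ω => μ₁ (X ω)) * ((1 - A) * (Y - fun ω => μ₀ (X ω))) = 0 := by
    funext ω
    rcases h₁.indicator_eq ω with h | h <;> simp [h]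
  rw [aipw_eq_add_mul_add_mul h₁.indicator_eq hπ, variance_add_of_condExp_eq_zero hm hg hgm hr
    (condExp_mul_add_mul_eq_zero hm ha haC hb hbC (h₁.memLp_residual.integrable one_le_two)
      (h₀.memLp_residual.integrable one_le_two) h₁.condExp_residual h₀.condExp_residual),
    ← integral_condExp hm]
  congr 1
  refine integral_congr_ae ((condExp_sq_mul_add_mul hm ha haC hb hbC h₁.memLp_residual
    h₀.memLp_residual h₁.condExp_residual_sq h₀.condExp_residual_sq horth).mono
    fun ω h => h.trans ?_)
  obtain ⟨h1, h0⟩ := hπ (X ω)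
  simp only [aipwCondVar, Pi.add_apply, Pi.mul_apply, Pi.pow_apply, Pi.sub_apply, Pi.one_apply]
  field_simp

theorem integrable_aipwCondVar [MeasurableSpace Ω] [MeasurableSpace 𝒳] {P : Measure Ω}
    (hX : Measurable X) (hσ₁ : Integrable (fun ω => σ₁sq (X ω)) P)
    (hσ₀ : Integrable (fun ω => σ₀sq (X ω)) P) (hc : 0 < c) (hπ₁m : Measurable π₁)
    (hπ₁ : ∀ x, π₁ x ∈ Set.Icc c (1 - c)) (hDm : Measurable D) (hD : ∀ x, D x ∈ Set.Icc 0 1) :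
    Integrable (fun ω => aipwCondVar D π₁ σ₁sq σ₀sq (X ω)) P := by
  have hsq : ∀ {d : ℝ}, d ∈ Set.Icc 0 1 → d ^ 2 ∈ Set.Icc 0 1 := fun hd =>
    ⟨sq_nonneg _, pow_le_one₀ hd.1 hd.2⟩
  refine (hσ₁.bdd_mul (c := c⁻¹) ?_ (ae_of_all _ fun ω => ?_)).add
    (hσ₀.bdd_mul (c := c⁻¹) ?_ (ae_of_all _ fun ω => ?_))
  · exact (((hDm.pow_const 2).div hπ₁m).comp hX).aestronglyMeasurable
  · exact norm_div_le_inv_of_mem_Icc hc (hsq (hD _)) (hπ₁ _).1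
  · exact ((((measurable_const.sub hDm).pow_const 2).div
      (measurable_const.sub hπ₁m)).comp hX).aestronglyMeasurable
  · exact norm_div_le_inv_of_mem_Icc hc
      (hsq ⟨by linarith [(hD (X ω)).2], by linarith [(hD (X ω)).1]⟩) (by linarith [(hπ₁ (X ω)).2])

theorem variance_aipw_tieBreakRule_half_sub [MeasurableSpace 𝒳] [IsProbabilityMeasure P]
    (hm : m ≤ m₀) (hX : Measurable[m] X) {σsq : 𝒳 → ℝ}
    (h₁ : ArmModel m P A Y (fun ω => μ₁ (X ω)) (fun ω => σ₁sq (X ω)) (fun ω => π₁ (X ω)))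
    (h₀ : ArmModel m P (1 - A) Y (fun ω => μ₀ (X ω)) (fun ω => σ₀sq (X ω))
      (1 - fun ω => π₁ (X ω)))
    (hc : 0 < c) (hπ₁m : Measurable π₁) (hπ₁ : ∀ x, π₁ x ∈ Set.Icc c (1 - c))
    (hμ₁m : Measurable μ₁) (hμ₀m : Measurable μ₀) (hσ₁ : Integrable (fun ω => σ₁sq (X ω)) P)
    (hσ₀ : Integrable (fun ω => σ₀sq (X ω)) P)
    (hσ : ∀ᵐ ω ∂P, σ₁sq (X ω) = σsq (X ω) ∧ σ₀sq (X ω) = σsq (X ω)) :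
    Integrable (fun ω => tiePenalty (π₁ (X ω)) * σsq (X ω)
      * (if μ₁ (X ω) - μ₀ (X ω) = 0 then 1 else 0)) P ∧
    Var[aipw X A Y (tieBreakRule μ₁ μ₀ fun _ => 1 / 2) π₁ μ₁ μ₀; P]
      - Var[aipw X A Y (tieBreakRule μ₁ μ₀ π₁) π₁ μ₁ μ₀; P]
      = ∫ ω, tiePenalty (π₁ (X ω)) * σsq (X ω)
          * (if μ₁ (X ω) - μ₀ (X ω) = 0 then 1 else 0) ∂P := by
  have hhalf := measurable_tieBreakRule (θ := fun _ => 1 / 2) hμ₁m hμ₀m measurable_const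
  have hhalf' : ∀ x, tieBreakRule μ₁ μ₀ (fun _ => 1 / 2) x ∈ Set.Icc 0 1 := fun x =>
    tieBreakRule_mem_Icc (by norm_num)
  have had := measurable_tieBreakRule hμ₁m hμ₀m hπ₁m
  have had' : ∀ x, tieBreakRule μ₁ μ₀ π₁ x ∈ Set.Icc 0 1 := fun x =>
    tieBreakRule_mem_Icc ⟨hc.le.trans (hπ₁ x).1, (hπ₁ x).2.trans (by linarith)⟩
  have hpt : ∀ᵐ ω ∂P, aipwCondVar (tieBreakRule μ₁ μ₀ fun _ => 1 / 2) π₁ σ₁sq σ₀sq (X ω)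
      - aipwCondVar (tieBreakRule μ₁ μ₀ π₁) π₁ σ₁sq σ₀sq (X ω)
      = tiePenalty (π₁ (X ω)) * σsq (X ω) * (if μ₁ (X ω) - μ₀ (X ω) = 0 then 1 else 0) :=
    hσ.mono fun ω h => by
      simp only [aipwCondVar, h.1, h.2]
      exact aipwCondVar_tieBreakRule_half_sub (hc.trans_le (hπ₁ _).1).ne'
        (by linarith [(hπ₁ (X ω)).2])
  have hXm := hX.mono hm le_rfl
  have hQhalf := integrable_aipwCondVar hXm hσ₁ hσ₀ hc hπ₁m hπ₁ hhalf hhalf'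
  have hQad := integrable_aipwCondVar hXm hσ₁ hσ₀ hc hπ₁m hπ₁ had had'
  refine ⟨(hQhalf.sub hQad).congr hpt, ?_⟩
  rw [variance_aipw hm hX h₁ h₀ hc hπ₁m hπ₁ hhalf hhalf',
    variance_aipw hm hX h₁ h₀ hc hπ₁m hπ₁ had had']
  simp only [tieBreakRule_mul_add_one_sub_mul]
  rw [add_sub_add_left_eq_sub, ← integral_sub hQhalf hQad]
  exact integral_congr_ae hpt

end AIPW

theorem stmt_15_general {Ω 𝒳 : Type*} [MeasurableSpace Ω] [MeasurableSpace 𝒳]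
    (P : Measure Ω) [IsProbabilityMeasure P]
    (X : Ω → 𝒳) (A Y : Ω → ℝ)
    (hX : Measurable X) (hA : Measurable A)
    (hAbin : ∀ ω, A ω = 0 ∨ A ω = 1) (hYL2 : MemLp Y 2 P)
    (c : ℝ) (hc : c ∈ Set.Ioo (0 : ℝ) (1 / 2))
    (π₁ : 𝒳 → ℝ) (hπ₁m : Measurable π₁) (hπ₁r : ∀ x, π₁ x ∈ Set.Icc c (1 - c))
    (hcondA : P[A | MeasurableSpace.comap X inferInstance]
      =ᵐ[P] fun ω => π₁ (X ω))
    (μ₁ μ₀ : 𝒳 → ℝ) (hμ₁m : Measurable μ₁) (hμ₀m : Measurable μ₀)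
    (hμ₁L2 : MemLp (fun ω => μ₁ (X ω)) 2 P) (hμ₀L2 : MemLp (fun ω => μ₀ (X ω)) 2 P)
    (hcond1 : P[fun ω => A ω * Y ω | MeasurableSpace.comap X inferInstance]
      =ᵐ[P] fun ω => μ₁ (X ω) * π₁ (X ω))
    (hcond0 : P[fun ω => (1 - A ω) * Y ω | MeasurableSpace.comap X inferInstance]
      =ᵐ[P] fun ω => μ₀ (X ω) * (1 - π₁ (X ω)))
    (σ₁sq σ₀sq : 𝒳 → ℝ)
    (hσ₁nn : ∀ x, 0 ≤ σ₁sq x)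
    (hσ₁L1 : Integrable (fun ω => σ₁sq (X ω)) P)
    (hσ₀L1 : Integrable (fun ω => σ₀sq (X ω)) P)
    (hcondsq1 : P[fun ω => A ω * Y ω ^ 2 | MeasurableSpace.comap X inferInstance]
      =ᵐ[P] fun ω => (μ₁ (X ω) ^ 2 + σ₁sq (X ω)) * π₁ (X ω))
    (hcondsq0 : P[fun ω => (1 - A ω) * Y ω ^ 2 | MeasurableSpace.comap X inferInstance]
      =ᵐ[P] fun ω => (μ₀ (X ω) ^ 2 + σ₀sq (X ω)) * (1 - π₁ (X ω)))
    (σsq : 𝒳 → ℝ)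
    (hhomo1 : (fun x => σ₁sq x) =ᵐ[Measure.map X P] σsq)
    (hhomo0 : (fun x => σ₀sq x) =ᵐ[Measure.map X P] σsq)
    (Dhalf : 𝒳 → ℝ)
    (hDhalf : ∀ x, Dhalf x = (if 0 < μ₁ x - μ₀ x then (1 : ℝ) else 0)
      + (1 / 2) * (if μ₁ x - μ₀ x = 0 then (1 : ℝ) else 0))
    (Dad : 𝒳 → ℝ)
    (hDad : ∀ x, Dad x = (if 0 < μ₁ x - μ₀ x then (1 : ℝ) else 0)
      + π₁ x * (if μ₁ x - μ₀ x = 0 then (1 : ℝ) else 0)) :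
    (variance (aipw X A Y Dhalf π₁ μ₁ μ₀) P - variance (aipw X A Y Dad π₁ μ₁ μ₀) P
      = ∫ ω, (1 / (4 * π₁ (X ω)) + 1 / (4 * (1 - π₁ (X ω))) - 1) * σsq (X ω)
          * (if μ₁ (X ω) - μ₀ (X ω) = 0 then (1 : ℝ) else 0) ∂P) ∧
    0 ≤ variance (aipw X A Y Dhalf π₁ μ₁ μ₀) P - variance (aipw X A Y Dad π₁ μ₁ μ₀) P ∧
    ((∀ᵐ ω ∂P, 0 < σsq (X ω)) →
      (variance (aipw X A Y Dhalf π₁ μ₁ μ₀) P = variance (aipw X A Y Dad π₁ μ₁ μ₀) P ↔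
        ∀ᵐ ω ∂P, π₁ (X ω) = 1 / 2 ∨ μ₁ (X ω) - μ₀ (X ω) ≠ 0)) := by
  obtain rfl : Dhalf = tieBreakRule μ₁ μ₀ (fun _ => 1 / 2) := funext hDhalf
  obtain rfl : Dad = tieBreakRule μ₁ μ₀ π₁ := funext hDad
  have hπ : ∀ x, 0 < π₁ x ∧ 0 < 1 - π₁ x := fun x =>
    ⟨hc.1.trans_le (hπ₁r x).1, by linarith [(hπ₁r x).2, hc.1]⟩
  have hXm := comap_measurable (m := ‹MeasurableSpace 𝒳›) X
  have arm₁ : ArmModel _ P A Y (fun ω => μ₁ (X ω)) (fun ω => σ₁sq (X ω)) (fun ω => π₁ (X ω)) :=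
    ⟨hAbin, hA.aestronglyMeasurable, hYL2, hμ₁L2, (hμ₁m.comp hXm).stronglyMeasurable, hcondA,
      hcond1, hcondsq1⟩
  have arm₀ := arm₁.one_sub hX.comap_le hμ₀L2 (hμ₀m.comp hXm).stronglyMeasurable hcond0 hcondsq0
  have hσ : ∀ᵐ ω ∂P, σ₁sq (X ω) = σsq (X ω) ∧ σ₀sq (X ω) = σsq (X ω) :=
    ae_of_ae_map hX.aemeasurable (hhomo1.and hhomo0)
  obtain ⟨hint, hdiff⟩ := variance_aipw_tieBreakRule_half_sub hX.comap_le hXm arm₁ arm₀ hc.1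
    hπ₁m hπ₁r hμ₁m hμ₀m hσ₁L1 hσ₀L1 hσ
  have hnn : 0 ≤ᵐ[P] fun ω => tiePenalty (π₁ (X ω)) * σsq (X ω)
      * (if μ₁ (X ω) - μ₀ (X ω) = 0 then (1 : ℝ) else 0) := hσ.mono fun ω h =>
    mul_nonneg (mul_nonneg (tiePenalty_nonneg (hπ _).1 (hπ _).2) (h.1 ▸ hσ₁nn (X ω)))
      (by split_ifs <;> norm_num)
  refine ⟨hdiff, hdiff ▸ integral_nonneg_of_ae hnn, fun hpos => ?_⟩
  rw [← sub_eq_zero, hdiff, integral_eq_zero_iff_of_nonneg_ae hnn hint]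
  exact eventually_congr (hpos.mono fun ω hs =>
    tiePenalty_mul_mul_ite_eq_zero_iff (hπ _).1 (hπ _).2 hs)

/-- Variance comparison with the subbagging limit: under homoscedasticity,
with `D_half = 1{τ>0} + (1/2)·1{τ=0}` (the limiting decision of the subbagging
estimator) and `D_ad = 1{τ>0} + π₁·1{τ=0}` (`τ = μ₁ − μ₀`),
`Var(ψ(D_half,π₁,(μ₁,μ₀))) − Var(ψ(D_ad,π₁,(μ₁,μ₀)))
 = E[(1/(4π₁(X)) + 1/(4(1−π₁(X))) − 1)·σ²(X)·1{τ(X)=0}] ≥ 0`.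
If moreover `σ²(X) > 0` a.s., equality holds iff `P(π₁(X)=1/2 ∨ τ(X)≠0) = 1`. -/
theorem stmt_15 {Ω 𝒳 : Type*} [MeasurableSpace Ω] [MeasurableSpace 𝒳]
    (P : Measure Ω) [IsProbabilityMeasure P]
    (X : Ω → 𝒳) (A Y : Ω → ℝ)
    (hX : Measurable X) (hA : Measurable A) (hY : Measurable Y)
    (hAbin : ∀ ω, A ω = 0 ∨ A ω = 1) (hYL2 : MemLp Y 2 P)
    (c : ℝ) (hc : c ∈ Set.Ioo (0 : ℝ) (1 / 2))
    (π₁ : 𝒳 → ℝ) (hπ₁m : Measurable π₁) (hπ₁r : ∀ x, π₁ x ∈ Set.Icc c (1 - c))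
    (hcondA : P[A | MeasurableSpace.comap X inferInstance]
      =ᵐ[P] fun ω => π₁ (X ω))
    (μ₁ μ₀ : 𝒳 → ℝ) (hμ₁m : Measurable μ₁) (hμ₀m : Measurable μ₀)
    (hμ₁L2 : MemLp (fun ω => μ₁ (X ω)) 2 P) (hμ₀L2 : MemLp (fun ω => μ₀ (X ω)) 2 P)
    (hcond1 : P[fun ω => A ω * Y ω | MeasurableSpace.comap X inferInstance]
      =ᵐ[P] fun ω => μ₁ (X ω) * π₁ (X ω))
    (hcond0 : P[fun ω => (1 - A ω) * Y ω | MeasurableSpace.comap X inferInstance]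
      =ᵐ[P] fun ω => μ₀ (X ω) * (1 - π₁ (X ω)))
    (σ₁sq σ₀sq : 𝒳 → ℝ) (hσ₁m : Measurable σ₁sq) (hσ₀m : Measurable σ₀sq)
    (hσ₁nn : ∀ x, 0 ≤ σ₁sq x) (hσ₀nn : ∀ x, 0 ≤ σ₀sq x)
    (hσ₁L1 : Integrable (fun ω => σ₁sq (X ω)) P)
    (hσ₀L1 : Integrable (fun ω => σ₀sq (X ω)) P)
    (hcondsq1 : P[fun ω => A ω * Y ω ^ 2 | MeasurableSpace.comap X inferInstance]
      =ᵐ[P] fun ω => (μ₁ (X ω) ^ 2 + σ₁sq (X ω)) * π₁ (X ω))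
    (hcondsq0 : P[fun ω => (1 - A ω) * Y ω ^ 2 | MeasurableSpace.comap X inferInstance]
      =ᵐ[P] fun ω => (μ₀ (X ω) ^ 2 + σ₀sq (X ω)) * (1 - π₁ (X ω)))
    (σsq : 𝒳 → ℝ) (hσm : Measurable σsq)
    (hhomo1 : (fun x => σ₁sq x) =ᵐ[Measure.map X P] σsq)
    (hhomo0 : (fun x => σ₀sq x) =ᵐ[Measure.map X P] σsq)
    (Dhalf : 𝒳 → ℝ)
    (hDhalf : ∀ x, Dhalf x = (if 0 < μ₁ x - μ₀ x then (1 : ℝ) else 0)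
      + (1 / 2) * (if μ₁ x - μ₀ x = 0 then (1 : ℝ) else 0))
    (Dad : 𝒳 → ℝ)
    (hDad : ∀ x, Dad x = (if 0 < μ₁ x - μ₀ x then (1 : ℝ) else 0)
      + π₁ x * (if μ₁ x - μ₀ x = 0 then (1 : ℝ) else 0)) :
    (variance (aipw X A Y Dhalf π₁ μ₁ μ₀) P - variance (aipw X A Y Dad π₁ μ₁ μ₀) P
      = ∫ ω, (1 / (4 * π₁ (X ω)) + 1 / (4 * (1 - π₁ (X ω))) - 1) * σsq (X ω)
          * (if μ₁ (X ω) - μ₀ (X ω) = 0 then (1 : ℝ) else 0) ∂P) ∧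
    0 ≤ variance (aipw X A Y Dhalf π₁ μ₁ μ₀) P - variance (aipw X A Y Dad π₁ μ₁ μ₀) P ∧
    ((∀ᵐ ω ∂P, 0 < σsq (X ω)) →
      (variance (aipw X A Y Dhalf π₁ μ₁ μ₀) P = variance (aipw X A Y Dad π₁ μ₁ μ₀) P ↔
        ∀ᵐ ω ∂P, π₁ (X ω) = 1 / 2 ∨ μ₁ (X ω) - μ₀ (X ω) ≠ 0)) :=
  stmt_15_general P X A Y hX hA hAbin hYL2 c hc π₁ hπ₁m hπ₁r hcondA μ₁ μ₀ hμ₁m hμ₀m hμ₁L2 hμ₀L2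
    hcond1 hcond0 σ₁sq σ₀sq hσ₁nn hσ₁L1 hσ₀L1 hcondsq1 hcondsq0 σsq hhomo1 hhomo0 Dhalf hDhalf Dad
    hDad
end
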